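/- arXiv:1810.04278 — 4 statements merged into one kernel-verified Lean document; each statement's English description precedes it below -/
import Mathlib

section
/- Let V ↪ H ↪ V* be a Gelfand triple of Hilbert spaces and let u ∈ H¹(t_{j−1}, t_j; V) with ü ∈ L²(t_{j−1}, t_j; V*). Then the piecewise linear interpolant ℓ(t) = u(t_{j−1}) + (u(t_j) − u(t_{j−1}))(t − t_{j−1})/τ satisfies, for all t ∈ [t_{j−1}, t_j], ‖ℓ(t) − u(t)‖_H² ≤ (τ²/√768) ∫_{t_{j−1}}^{t_j} (‖ü(s)‖_{V*}² + ‖u̇(s)‖_V²) ds, where τ = t_j − t_{j−1}. -/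
/-!
Put `e = u - ℓ` and `v = e t`, and write `a = t - t₁`, `b = t₂ - t`, `τ = a + b`; `e` vanishes at
`t₁` and `t₂`.

* First order: `τ ‖v‖_V² ≤ a b ∫ ‖ė‖²` by the fundamental theorem of calculus on `[t₁, t]` and
  `[t, t₂]` and Cauchy–Schwarz, and `∫ ‖ė‖² ≤ ∫ ‖u̇‖²` because `ė = u̇ - c` with `c` the mean
  of `u̇`.
* Second order: the scalar function `F s = ⟪ι (e s), ι v⟫` vanishes at both ends and `F'' = ü(·) v`,
  so `F t` is the integral of `ü(·) v` against the Green kernel of `d²/ds²`; Cauchy–Schwarz gives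
  `τ² ‖ι v‖⁴ ≤ (a² b² τ / 3) ‖v‖_V² ∫ ‖ü‖²`.

Multiplying the two and using AM–GM twice, `a b ≤ τ² / 4` and `A B ≤ (A + B)² / 4` for
`A = ∫ ‖ü‖²`, `B = ∫ ‖u̇‖²`, produces the constant `1 / (3 · 4³ · 4) = 1 / 768` for `‖ι v‖⁴`.
-/

open MeasureTheory Set intervalIntegral
open scoped RealInnerProductSpace

lemma sq_intervalIntegral_mul_le {a b : ℝ} (hab : a ≤ b) {f g : ℝ → ℝ}
    (hf : IntervalIntegrable (fun s => f s ^ 2) volume a b)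
    (hg : IntervalIntegrable (fun s => g s ^ 2) volume a b)
    (hfg : IntervalIntegrable (fun s => f s * g s) volume a b) :
    (∫ s in a..b, f s * g s) ^ 2 ≤ (∫ s in a..b, f s ^ 2) * ∫ s in a..b, g s ^ 2 := by
  have hquad : ∀ x : ℝ, 0 ≤ (∫ s in a..b, g s ^ 2) * (x * x)
      + -(2 * ∫ s in a..b, f s * g s) * x + ∫ s in a..b, f s ^ 2 := by
    intro x
    have hnonneg : 0 ≤ ∫ s in a..b, (f s - x * g s) ^ 2 :=
      integral_nonneg hab fun s _ => sq_nonneg _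
    have hexpand : (fun s => (f s - x * g s) ^ 2)
        = fun s => f s ^ 2 - (2 * x) * (f s * g s) + x ^ 2 * g s ^ 2 := by
      funext s; ring
    rw [hexpand, integral_add (hf.sub (hfg.const_mul _)) (hg.const_mul _),
      integral_sub hf (hfg.const_mul _), intervalIntegral.integral_const_mul,
      intervalIntegral.integral_const_mul] at hnonneg
    linarith
  have := discrim_le_zero hquad
  rw [discrim] at this
  linarith

lemma sq_intervalIntegral_le {a b : ℝ} (hab : a ≤ b) {f : ℝ → ℝ}
    (hf : IntervalIntegrable f volume a b)
    (hf2 : IntervalIntegrable (fun s => f s ^ 2) volume a b) :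
    (∫ s in a..b, f s) ^ 2 ≤ (b - a) * ∫ s in a..b, f s ^ 2 := by
  have := sq_intervalIntegral_mul_le hab (g := fun _ => 1) hf2 intervalIntegrable_const
    (by simpa using hf)
  simpa [mul_comm] using this

lemma add_sq_le_of_sq_le_mul {x y P Q X Y : ℝ} (hP : 0 ≤ P) (hQ : 0 ≤ Q) (hX : 0 ≤ X)
    (hY : 0 ≤ Y) (hx : x ^ 2 ≤ P * X) (hy : y ^ 2 ≤ Q * Y) :
    (x + y) ^ 2 ≤ (P + Q) * (X + Y) := by
  have hxy : (2 * (x * y)) ^ 2 ≤ (P * Y + Q * X) ^ 2 := by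
    nlinarith [mul_le_mul hx hy (sq_nonneg _) (by positivity), sq_nonneg (P * Y - Q * X)]
  nlinarith [(abs_le_of_sq_le_sq' hxy (by positivity)).2]

lemma IntervalIntegrable.of_sq_norm {E : Type*} [NormedAddCommGroup E] {f : ℝ → E} {a b : ℝ}
    (hm : AEStronglyMeasurable f (volume.restrict (uIoc a b)))
    (hf : IntervalIntegrable (fun s => ‖f s‖ ^ 2) volume a b) :
    IntervalIntegrable f volume a b :=
  ((intervalIntegrable_const (c := 1)).add hf).mono_fun' hm <| ae_of_all _ fun s => by
    nlinarith [sq_nonneg (‖f s‖ - 1)]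

lemma IntervalIntegrable.norm_sub_const_sq {E : Type*} [NormedAddCommGroup E] {f : ℝ → E}
    {a b : ℝ} (c : E) (hf : IntervalIntegrable f volume a b)
    (hf2 : IntervalIntegrable (fun s => ‖f s‖ ^ 2) volume a b) :
    IntervalIntegrable (fun s => ‖f s - c‖ ^ 2) volume a b :=
  ((hf2.const_mul 2).add (intervalIntegrable_const (c := 2 * ‖c‖ ^ 2))).mono_fun'
    ((hf.def'.aestronglyMeasurable.sub aestronglyMeasurable_const).norm.pow 2) <|
    ae_of_all _ fun s => by
      have := norm_sub_le (f s) c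
      simp only [norm_pow, norm_norm]
      nlinarith [norm_nonneg (f s - c), sq_nonneg (‖f s‖ - ‖c‖)]

lemma integral_norm_sub_sq_le {E : Type*} [NormedAddCommGroup E] [InnerProductSpace ℝ E]
    [CompleteSpace E] {f : ℝ → E} {a b : ℝ} (hab : a ≤ b) {c : E}
    (hc : ∫ s in a..b, f s = (b - a) • c) (hf : IntervalIntegrable f volume a b)
    (hf2 : IntervalIntegrable (fun s => ‖f s‖ ^ 2) volume a b) :
    ∫ s in a..b, ‖f s - c‖ ^ 2 ≤ ∫ s in a..b, ‖f s‖ ^ 2 := by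
  have hinner : ∫ s in a..b, ⟪c, f s⟫ = (b - a) * ‖c‖ ^ 2 := by
    have := (innerSL ℝ c).intervalIntegral_comp_comm hf
    simp only [innerSL_apply_apply] at this
    rw [this, hc, real_inner_smul_right, real_inner_self_eq_norm_sq]
  have hinner_int : IntervalIntegrable (fun s => ⟪c, f s⟫) volume a b :=
    ⟨hf.1.const_inner c, hf.2.const_inner c⟩
  simp_rw [norm_sub_sq_real, real_inner_comm c]
  rw [integral_add (hf2.sub (hinner_int.const_mul 2)) intervalIntegrable_const,
    integral_sub hf2 (hinner_int.const_mul 2), intervalIntegral.integral_const_mul, hinner,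
    intervalIntegral.integral_const, smul_eq_mul]
  nlinarith [mul_nonneg (sub_nonneg.2 hab) (sq_nonneg ‖c‖)]

section Normed

variable {E : Type*} [NormedAddCommGroup E] [NormedSpace ℝ E] [CompleteSpace E]

lemma aestronglyMeasurable_of_hasDerivAt {f f' : ℝ → E} {a b : ℝ} (hab : a ≤ b)
    (hf : ∀ s ∈ Icc a b, HasDerivAt f (f' s) s) :
    AEStronglyMeasurable f' (volume.restrict (uIoc a b)) := by
  refine (stronglyMeasurable_deriv f).aestronglyMeasurable.congr ?_
  filter_upwards [ae_restrict_mem measurableSet_uIoc] with s hs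
  rw [uIoc_of_le hab] at hs
  exact (hf s (Ioc_subset_Icc_self hs)).deriv

lemma norm_sub_sq_le_of_hasDerivAt {f f' : ℝ → E} {a b : ℝ} (hab : a ≤ b)
    (hf : ∀ s ∈ uIcc a b, HasDerivAt f (f' s) s) (hf' : IntervalIntegrable f' volume a b)
    (hf'2 : IntervalIntegrable (fun s => ‖f' s‖ ^ 2) volume a b) :
    ‖f b - f a‖ ^ 2 ≤ (b - a) * ∫ s in a..b, ‖f' s‖ ^ 2 := by
  rw [← integral_eq_sub_of_hasDerivAt hf hf']
  calc ‖∫ s in a..b, f' s‖ ^ 2 ≤ (∫ s in a..b, ‖f' s‖) ^ 2 := by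
        gcongr; exact norm_integral_le_integral_norm hab
    _ ≤ (b - a) * ∫ s in a..b, ‖f' s‖ ^ 2 := sq_intervalIntegral_le hab hf'.norm hf'2

lemma sub_mul_norm_sq_le_of_hasDerivAt {f f' : ℝ → E} {a b t : ℝ} (ht : t ∈ Icc a b)
    (hf : ∀ s ∈ Icc a b, HasDerivAt f (f' s) s) (hfa : f a = 0) (hfb : f b = 0)
    (hf' : IntervalIntegrable f' volume a b)
    (hf'2 : IntervalIntegrable (fun s => ‖f' s‖ ^ 2) volume a b) :
    (b - a) * ‖f t‖ ^ 2 ≤ (t - a) * (b - t) * ∫ s in a..b, ‖f' s‖ ^ 2 := by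
  have hab : a ≤ b := ht.1.trans ht.2
  have hleft := uIcc_subset_uIcc_left (uIcc_of_le hab ▸ ht)
  have hright := uIcc_subset_uIcc_right (uIcc_of_le hab ▸ ht)
  rw [← uIcc_of_le hab] at hf
  have h₁ := norm_sub_sq_le_of_hasDerivAt ht.1
    (fun s hs => hf s (hleft hs)) (hf'.mono_set hleft) (hf'2.mono_set hleft)
  have h₂ := norm_sub_sq_le_of_hasDerivAt ht.2
    (fun s hs => hf s (hright hs)) (hf'.mono_set hright) (hf'2.mono_set hright)
  rw [hfa, sub_zero] at h₁
  rw [hfb, zero_sub, norm_neg] at h₂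
  rw [← integral_add_adjacent_intervals (hf'2.mono_set hleft) (hf'2.mono_set hright)]
  have := sub_nonneg.2 ht.1
  have := sub_nonneg.2 ht.2
  calc (b - a) * ‖f t‖ ^ 2 = (b - t) * ‖f t‖ ^ 2 + (t - a) * ‖f t‖ ^ 2 := by ring
    _ ≤ (b - t) * ((t - a) * ∫ s in a..t, ‖f' s‖ ^ 2)
        + (t - a) * ((b - t) * ∫ s in t..b, ‖f' s‖ ^ 2) := by gcongr
    _ = _ := by ring

end Normed

lemma sub_mul_eq_integral_of_hasDerivAt_of_hasDerivAt {F G g : ℝ → ℝ} {a b t : ℝ}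
    (ht : t ∈ Icc a b)
    (hF : ∀ s ∈ Icc a b, HasDerivAt F (G s) s) (hG : ∀ s ∈ Icc a b, HasDerivAt G (g s) s)
    (hFa : F a = 0) (hFb : F b = 0) (hg : IntervalIntegrable g volume a b) :
    (b - a) * F t
      = -((b - t) * ∫ s in a..t, (s - a) * g s) - (t - a) * ∫ s in t..b, (b - s) * g s := by
  have hab : a ≤ b := ht.1.trans ht.2
  have hleft := uIcc_subset_uIcc_left (uIcc_of_le hab ▸ ht)
  have hright := uIcc_subset_uIcc_right (uIcc_of_le hab ▸ ht)
  rw [← uIcc_of_le hab] at hF hG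
  have hFTC : ∀ {x y}, uIcc x y ⊆ uIcc a b → ∫ s in x..y, G s = F y - F x := fun h =>
    integral_eq_sub_of_hasDerivAt (fun s hs => hF s (h hs))
      (ContinuousOn.intervalIntegrable fun s hs => (hG s (h hs)).continuousAt.continuousWithinAt)
  have hI₁ : ∫ s in a..t, (s - a) * g s = (t - a) * G t - (F t - F a) := by
    rw [integral_mul_deriv_eq_deriv_mul (u' := fun _ => 1)
      (fun s _ => (hasDerivAt_id' s).sub_const a) (fun s hs => hG s (hleft hs))
      intervalIntegrable_const (hg.mono_set hleft)]
    simp only [one_mul, sub_self, zero_mul, sub_zero, hFTC hleft]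
  have hI₂ : ∫ s in t..b, (b - s) * g s = -((b - t) * G t) + (F b - F t) := by
    rw [integral_mul_deriv_eq_deriv_mul (u' := fun _ => -1)
      (fun s _ => by simpa using (hasDerivAt_id' s).const_sub b) (fun s hs => hG s (hright hs))
      intervalIntegrable_const (hg.mono_set hright)]
    simp only [neg_one_mul, intervalIntegral.integral_neg, sub_self, zero_mul, zero_sub,
      sub_neg_eq_add, hFTC hright]
  rw [hI₁, hI₂, hFa, hFb]
  ring

lemma sub_sq_mul_sq_le_of_hasDerivAt_of_hasDerivAt {F G g : ℝ → ℝ} {a b t : ℝ}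
    (ht : t ∈ Icc a b)
    (hF : ∀ s ∈ Icc a b, HasDerivAt F (G s) s) (hG : ∀ s ∈ Icc a b, HasDerivAt G (g s) s)
    (hFa : F a = 0) (hFb : F b = 0) (hg : IntervalIntegrable g volume a b)
    (hg2 : IntervalIntegrable (fun s => g s ^ 2) volume a b) :
    (b - a) ^ 2 * F t ^ 2 ≤ (t - a) ^ 2 * (b - t) ^ 2 * (b - a) / 3 * ∫ s in a..b, g s ^ 2 := by
  have hab : a ≤ b := ht.1.trans ht.2
  have hleft := uIcc_subset_uIcc_left (uIcc_of_le hab ▸ ht)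
  have hright := uIcc_subset_uIcc_right (uIcc_of_le hab ▸ ht)
  have hI₁ : (∫ s in a..t, (s - a) * g s) ^ 2 ≤ (t - a) ^ 3 / 3 * ∫ s in a..t, g s ^ 2 := by
    have hw : Continuous fun s : ℝ => s - a := by fun_prop
    have hcs := sq_intervalIntegral_mul_le ht.1 ((hw.pow 2).intervalIntegrable _ _)
      (hg2.mono_set hleft) ((hg.mono_set hleft).continuousOn_mul hw.continuousOn)
    norm_num [intervalIntegral.integral_comp_sub_right fun x => x ^ 2] at hcs
    exact hcs
  have hI₂ : (∫ s in t..b, (b - s) * g s) ^ 2 ≤ (b - t) ^ 3 / 3 * ∫ s in t..b, g s ^ 2 := by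
    have hw : Continuous fun s : ℝ => b - s := by fun_prop
    have hcs := sq_intervalIntegral_mul_le ht.2 ((hw.pow 2).intervalIntegrable _ _)
      (hg2.mono_set hright) ((hg.mono_set hright).continuousOn_mul hw.continuousOn)
    norm_num [intervalIntegral.integral_comp_sub_left fun x => x ^ 2] at hcs
    exact hcs
  have hsum := add_sq_le_of_sq_le_mul (P := (b - t) ^ 2 * ((t - a) ^ 3 / 3))
    (Q := (t - a) ^ 2 * ((b - t) ^ 3 / 3)) (by have := sub_nonneg.2 ht.1; positivity)
    (by have := sub_nonneg.2 ht.2; positivity)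
    (integral_nonneg ht.1 fun s _ => sq_nonneg (g s))
    (integral_nonneg ht.2 fun s _ => sq_nonneg (g s))
    (by rw [mul_pow, mul_assoc]; exact mul_le_mul_of_nonneg_left hI₁ (sq_nonneg _))
    (by rw [mul_pow, mul_assoc]; exact mul_le_mul_of_nonneg_left hI₂ (sq_nonneg _))
  rw [← mul_pow, sub_mul_eq_integral_of_hasDerivAt_of_hasDerivAt ht hF hG hFa hFb hg,
    ← integral_add_adjacent_intervals (hg2.mono_set hleft) (hg2.mono_set hright)]
  convert hsum using 1
  · ring
  · ring

lemma sub_sq_mul_sq_norm_sq_le_of_hasDerivAt {V H : Type*} [NormedAddCommGroup V] [NormedSpace ℝ V]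
    [NormedAddCommGroup H] [InnerProductSpace ℝ H] (ι : V →L[ℝ] H)
    {f f' : ℝ → V} {f'' : ℝ → V →L[ℝ] ℝ} {a b t : ℝ} (ht : t ∈ Icc a b)
    (hf : ∀ s ∈ Icc a b, HasDerivAt f (f' s) s)
    (hf' : ∀ v, ∀ s ∈ Icc a b, HasDerivAt (fun s => ⟪ι (f' s), ι v⟫) (f'' s v) s)
    (hfa : f a = 0) (hfb : f b = 0)
    (hf''2 : IntervalIntegrable (fun s => ‖f'' s‖ ^ 2) volume a b) :
    (b - a) ^ 2 * (‖ι (f t)‖ ^ 2) ^ 2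
      ≤ (t - a) ^ 2 * (b - t) ^ 2 * (b - a) / 3 * (‖f t‖ ^ 2 * ∫ s in a..b, ‖f'' s‖ ^ 2) := by
  have hab : a ≤ b := ht.1.trans ht.2
  set v := f t
  have hF : ∀ s ∈ Icc a b, HasDerivAt (fun s => ⟪ι (f s), ι v⟫) ⟪ι (f' s), ι v⟫ s :=
    fun s hs => by
      simpa using (ι.hasFDerivAt.comp_hasDerivAt s (hf s hs)).inner ℝ (hasDerivAt_const s (ι v))
  have hpointwise : ∀ s, (f'' s v) ^ 2 ≤ ‖v‖ ^ 2 * ‖f'' s‖ ^ 2 := fun s => by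
    simpa [mul_pow, mul_comm] using pow_le_pow_left₀ (norm_nonneg _) ((f'' s).le_opNorm v) 2
  have hmeas := aestronglyMeasurable_of_hasDerivAt hab (hf' v)
  have hg2 : IntervalIntegrable (fun s => (f'' s v) ^ 2) volume a b :=
    (hf''2.const_mul _).mono_fun' (hmeas.pow 2) (ae_of_all _ fun s => by simpa using hpointwise s)
  have hg : IntervalIntegrable (fun s => f'' s v) volume a b :=
    .of_sq_norm hmeas (by simpa using hg2)
  calc (b - a) ^ 2 * (‖ι v‖ ^ 2) ^ 2 = (b - a) ^ 2 * ⟪ι (f t), ι v⟫ ^ 2 := by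
        rw [real_inner_self_eq_norm_sq]
    _ ≤ (t - a) ^ 2 * (b - t) ^ 2 * (b - a) / 3 * ∫ s in a..b, (f'' s v) ^ 2 :=
        sub_sq_mul_sq_le_of_hasDerivAt_of_hasDerivAt ht hF (hf' v) (by simp [hfa]) (by simp [hfb])
          hg hg2
    _ ≤ (t - a) ^ 2 * (b - t) ^ 2 * (b - a) / 3 * (‖v‖ ^ 2 * ∫ s in a..b, ‖f'' s‖ ^ 2) := by
        rw [← intervalIntegral.integral_const_mul (‖v‖ ^ 2)]
        exact mul_le_mul_of_nonneg_left
          (integral_mono_on hab hg2 (hf''2.const_mul _) fun s _ => hpointwise s)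
          (div_nonneg (mul_nonneg (mul_nonneg (sq_nonneg _) (sq_nonneg _)) (sub_nonneg.2 hab))
            zero_le_three)

lemma le_sq_div_sqrt_768_mul_add {τ a b L N A B : ℝ} (ha : 0 ≤ a) (hb : 0 ≤ b)
    (hτ : a + b = τ) (hτ0 : 0 < τ) (hL : 0 ≤ L) (hA : 0 ≤ A) (hB : 0 ≤ B)
    (hN : τ * N ≤ a * b * B) (hL2 : τ ^ 2 * L ^ 2 ≤ a ^ 2 * b ^ 2 * τ / 3 * (N * A)) :
    L ≤ τ ^ 2 / √768 * (A + B) := by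
  have hab : a * b ≤ τ ^ 2 / 4 := by nlinarith [sq_nonneg (a - b)]
  have hAB : A * B ≤ (A + B) ^ 2 / 4 := by nlinarith [sq_nonneg (A - B)]
  have hcube : τ ^ 2 * L ^ 2 ≤ (a * b) ^ 3 * (A * B) / 3 :=
    calc τ ^ 2 * L ^ 2 ≤ a ^ 2 * b ^ 2 * A / 3 * (τ * N) := by linarith
      _ ≤ a ^ 2 * b ^ 2 * A / 3 * (a * b * B) := by gcongr
      _ = (a * b) ^ 3 * (A * B) / 3 := by ring
  have hsq : L ^ 2 ≤ (τ ^ 2 / √768 * (A + B)) ^ 2 := by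
    have hmono : (a * b) ^ 3 * (A * B) ≤ (τ ^ 2 / 4) ^ 3 * ((A + B) ^ 2 / 4) := by
      gcongr
    rw [mul_pow, div_pow, Real.sq_sqrt (by norm_num)]
    refine le_of_mul_le_mul_left ?_ (by positivity : 0 < τ ^ 2)
    calc τ ^ 2 * L ^ 2 ≤ (τ ^ 2 / 4) ^ 3 * ((A + B) ^ 2 / 4) / 3 := by linarith
      _ = τ ^ 2 * ((τ ^ 2) ^ 2 / 768 * (A + B) ^ 2) := by ring
  exact (pow_le_pow_iff_left₀ hL (by positivity) two_ne_zero).1 hsq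

section LinearInterp

variable {E : Type*} [NormedAddCommGroup E] [NormedSpace ℝ E]

noncomputable def linearInterp (u : ℝ → E) (t₁ t₂ s : ℝ) : E :=
  u t₁ + ((s - t₁) / (t₂ - t₁)) • (u t₂ - u t₁)

@[simp]
lemma linearInterp_left (u : ℝ → E) (t₁ t₂ : ℝ) : linearInterp u t₁ t₂ t₁ = u t₁ := by
  simp [linearInterp]

lemma linearInterp_right (u : ℝ → E) {t₁ t₂ : ℝ} (h : t₁ ≠ t₂) :
    linearInterp u t₁ t₂ t₂ = u t₂ := by
  simp [linearInterp, div_self (sub_ne_zero.2 h.symm)]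

lemma hasDerivAt_linearInterp (u : ℝ → E) (t₁ t₂ s : ℝ) :
    HasDerivAt (linearInterp u t₁ t₂) ((t₂ - t₁)⁻¹ • (u t₂ - u t₁)) s := by
  unfold linearInterp
  simpa [div_eq_inv_mul] using
    ((((hasDerivAt_id' s).sub_const t₁).div_const (t₂ - t₁)).smul_const (u t₂ - u t₁)).const_add
      (u t₁)

end LinearInterp

theorem piecewise_linear_interpolation_error_general
    {V H : Type*} [NormedAddCommGroup V] [InnerProductSpace ℝ V] [CompleteSpace V]
    [NormedAddCommGroup H] [InnerProductSpace ℝ H]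
    (ι : V →L[ℝ] H)
    (t₁ t₂ : ℝ) (hlt : t₁ < t₂)
    (u udot : ℝ → V) (uddot : ℝ → (V →L[ℝ] ℝ))
    (hu : ∀ t ∈ Set.Icc t₁ t₂, HasDerivAt u (udot t) t)
    (huddot : ∀ v : V, ∀ t ∈ Set.Icc t₁ t₂,
      HasDerivAt (fun s => ⟪ι (udot s), ι v⟫) (uddot t v) t)
    (hint : IntervalIntegrable (fun s => ‖uddot s‖ ^ 2 + ‖udot s‖ ^ 2)
      MeasureTheory.volume t₁ t₂)
    (t : ℝ) (ht : t ∈ Set.Icc t₁ t₂) :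
    ‖ι (u t₁ + ((t - t₁) / (t₂ - t₁)) • (u t₂ - u t₁)) - ι (u t)‖ ^ 2
      ≤ (t₂ - t₁) ^ 2 / Real.sqrt 768 *
          ∫ s in t₁..t₂, (‖uddot s‖ ^ 2 + ‖udot s‖ ^ 2) := by
  have hudot_meas := aestronglyMeasurable_of_hasDerivAt hlt.le hu
  have hB : IntervalIntegrable (fun s => ‖udot s‖ ^ 2) volume t₁ t₂ :=
    hint.mono_fun' (hudot_meas.norm.pow 2) (ae_of_all _ fun s => by simp)
  have hA : IntervalIntegrable (fun s => ‖uddot s‖ ^ 2) volume t₁ t₂ := by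
    simpa using hint.sub hB
  have hudot := IntervalIntegrable.of_sq_norm hudot_meas hB
  set c : V := (t₂ - t₁)⁻¹ • (u t₂ - u t₁)
  set e : ℝ → V := fun s => u s - linearInterp u t₁ t₂ s
  have he : ∀ s ∈ Icc t₁ t₂, HasDerivAt e (udot s - c) s := fun s hs =>
    (hu s hs).sub (hasDerivAt_linearInterp u t₁ t₂ s)
  have he₁ : e t₁ = 0 := by simp [e]
  have he₂ : e t₂ = 0 := by simp [e, linearInterp_right u hlt.ne]
  have hmean : ∫ s in t₁..t₂, udot s = (t₂ - t₁) • c := by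
    rw [integral_eq_sub_of_hasDerivAt (fun s hs => hu s (uIcc_of_le hlt.le ▸ hs)) hudot,
      smul_inv_smul₀ (sub_ne_zero.2 hlt.ne')]
  have hfirst : (t₂ - t₁) * ‖e t‖ ^ 2 ≤ (t - t₁) * (t₂ - t) * ∫ s in t₁..t₂, ‖udot s‖ ^ 2 :=
    (sub_mul_norm_sq_le_of_hasDerivAt ht he he₁ he₂ (hudot.sub intervalIntegrable_const)
      (hudot.norm_sub_const_sq c hB)).trans <|
      mul_le_mul_of_nonneg_left (integral_norm_sub_sq_le hlt.le hmean hudot hB)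
        (mul_nonneg (sub_nonneg.2 ht.1) (sub_nonneg.2 ht.2))
  have hsecond := sub_sq_mul_sq_norm_sq_le_of_hasDerivAt ι ht he
    (fun v s hs => by simpa [inner_sub_left] using (huddot v s hs).sub_const ⟪ι c, ι v⟫)
    he₁ he₂ hA
  rw [norm_sub_rev, ← map_sub, integral_add hA hB]
  exact le_sq_div_sqrt_768_mul_add (sub_nonneg.2 ht.1) (sub_nonneg.2 ht.2) (by ring)
    (sub_pos.2 hlt) (sq_nonneg _) (integral_nonneg hlt.le fun s _ => sq_nonneg _)
    (integral_nonneg hlt.le fun s _ => sq_nonneg _) hfirst hsecond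

/-- Piecewise linear interpolation error in a Gelfand triple `V ↪ H ↪ V*`:
`‖ℓ(t) − u(t)‖_H² ≤ (τ²/√768) ∫ (‖ü‖_{V*}² + ‖u̇‖_V²)`, where
`ℓ(t) = u(t₁) + (u(t₂) − u(t₁))(t − t₁)/τ`, `τ = t₂ − t₁`. The embedding is `ι`,
`u̇` is the derivative of `u` in `V` (hence in `H`), and the second derivative `ü`
is taken weakly, as a functional on `V` via the pairing `⟪ι(u̇(·)), ι v⟫`. -/
theorem piecewise_linear_interpolation_error
    {V H : Type*} [NormedAddCommGroup V] [InnerProductSpace ℝ V] [CompleteSpace V]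
    [NormedAddCommGroup H] [InnerProductSpace ℝ H] [CompleteSpace H]
    (ι : V →L[ℝ] H) (hinj : Function.Injective ι) (hdense : DenseRange ι)
    (t₁ t₂ : ℝ) (hlt : t₁ < t₂)
    (u udot : ℝ → V) (uddot : ℝ → (V →L[ℝ] ℝ))
    (hu : ∀ t ∈ Set.Icc t₁ t₂, HasDerivAt u (udot t) t)
    (huddot : ∀ v : V, ∀ t ∈ Set.Icc t₁ t₂,
      HasDerivAt (fun s => ⟪ι (udot s), ι v⟫) (uddot t v) t)
    (hint : IntervalIntegrable (fun s => ‖uddot s‖ ^ 2 + ‖udot s‖ ^ 2)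
      MeasureTheory.volume t₁ t₂)
    (t : ℝ) (ht : t ∈ Set.Icc t₁ t₂) :
    ‖ι (u t₁ + ((t - t₁) / (t₂ - t₁)) • (u t₂ - u t₁)) - ι (u t)‖ ^ 2
      ≤ (t₂ - t₁) ^ 2 / Real.sqrt 768 *
          ∫ s in t₁..t₂, (‖uddot s‖ ^ 2 + ‖udot s‖ ^ 2) :=
  piecewise_linear_interpolation_error_general ι t₁ t₂ hlt u udot uddot hu huddot hint t ht
end

section
/- Let V ↪ H ↪ V* be a Gelfand triple, L : V → V* a bounded linear operator that is elliptic on V with constant c_L > 0 (⟨L v, v⟩ ≥ c_L ‖v‖_V²), and consider the implicit Euler recursion (p_j − p_{j−1})/τ + L p_j = F_j in V* with data F_j := u̇(t_j) + L u(t_j), where u ∈ H²(0,T;V*) ∩ H¹(0,T;V) and p_0 = u(0). Then for all j, ‖p_j − u(t_j)‖_H² + c_L Σ_{k=1}^j τ ‖p_k − u(t_k)‖_V² ≤ (τ²/(3 c_L)) ∫₀^{t_j} ‖ü(s)‖_{V*}² ds. -/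
/-!
Test the error equation of step `j` with the error `e_j = p_j - u(t_j)` itself. Since
`2⟪e_j - e_{j-1}, e_j⟫_H ≥ ‖e_j‖_H² - ‖e_{j-1}‖_H²` and `⟨L e_j, e_j⟩ ≥ c_L ‖e_j‖_V²`, everything
reduces to bounding the consistency error `τ u̇(t_j) - (u(t_j) - u(t_{j-1}))`, which by Taylor's
formula is `∫_{t_{j-1}}^{t_j} (s - t_{j-1}) ü(s) ds`. Young's inequality with the right weight
bounds its pairing with `e_j` by `c_L τ ‖e_j‖_V² / 2 + τ²/(6 c_L) ∫ ‖ü‖_{V*}²`, which gives the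
one-step estimate; the theorem follows by telescoping.
-/

open scoped RealInnerProductSpace
open MeasureTheory Set

theorem norm_sq_sub_norm_sq_le_two_mul_inner {E : Type*} [NormedAddCommGroup E]
    [InnerProductSpace ℝ E] (x y : E) : ‖x‖ ^ 2 - ‖y‖ ^ 2 ≤ 2 * ⟪x - y, x⟫ := by
  have := norm_sub_sq_real x y
  rw [inner_sub_left, real_inner_self_eq_norm_sq, real_inner_comm]
  nlinarith [sq_nonneg ‖x - y‖]

/-- Taylor's formula `(b - a) f'(b) - (f b - f a) = ∫ₐᵇ (s - a) f''(s) ds`, as a one-sided bound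
that needs integrability of the majorant `φ` only. -/
theorem taylor_remainder_le_integral {f f' f'' φ : ℝ → ℝ} {a b : ℝ} (hab : a ≤ b)
    (hf : ∀ s ∈ Icc a b, HasDerivAt f (f' s) s)
    (hf' : ∀ s ∈ Icc a b, HasDerivAt f' (f'' s) s)
    (hφ : IntegrableOn φ (Icc a b)) (hle : ∀ s ∈ Ioo a b, (s - a) * f'' s ≤ φ s) :
    (b - a) * f' b - (f b - f a) ≤ ∫ s in a..b, φ s := by
  have hg : ∀ s ∈ Icc a b, HasDerivAt (fun s => (s - a) * f' s - f s) ((s - a) * f'' s) s :=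
    fun s hs => ((((hasDerivAt_id s).sub_const a).mul (hf' s hs)).sub (hf s hs)).congr_deriv
      (by simp)
  have key := intervalIntegral.sub_le_integral_of_hasDeriv_right_of_le hab
    (fun s hs => (hg s hs).continuousAt.continuousWithinAt)
    (fun s hs => (hg s (Ioo_subset_Icc_self hs)).hasDerivWithinAt) hφ hle
  simp only [sub_self, zero_mul, zero_sub] at key
  linarith

theorem integral_sq_sub_left_endpoint (t τ : ℝ) : ∫ s in t..t + τ, (s - t) ^ 2 = τ ^ 3 / 3 := by
  rw [intervalIntegral.integral_comp_sub_right (· ^ 2), integral_pow]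
  ring

section

variable {V H : Type*} [NormedAddCommGroup V] [NormedSpace ℝ V]
  [NormedAddCommGroup H] [InnerProductSpace ℝ H] (ι : V →L[ℝ] H)

theorem implicit_euler_consistency_error_le {c t τ : ℝ} (hc : 0 < c) (hτ : 0 < τ)
    {u udot : ℝ → V} {uddot : ℝ → V →L[ℝ] ℝ}
    (hu : ∀ s ∈ Icc t (t + τ), HasDerivAt u (udot s) s)
    (huddot : ∀ v, ∀ s ∈ Icc t (t + τ),
      HasDerivAt (fun r => ⟪ι (udot r), ι v⟫) (uddot s v) s)
    (hint : IntervalIntegrable (fun s => ‖uddot s‖ ^ 2) volume t (t + τ)) (e : V) :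
    τ * ⟪ι (udot (t + τ)), ι e⟫ - ⟪ι (u (t + τ)) - ι (u t), ι e⟫
      ≤ c * τ / 2 * ‖e‖ ^ 2 + τ ^ 2 / (6 * c) * ∫ s in t..t + τ, ‖uddot s‖ ^ 2 := by
  have htτ : t ≤ t + τ := by linarith
  -- The Young weight `ε = 3c/τ²` turns `∫ ε (s - t)² ‖e‖² / 2` into exactly `c τ ‖e‖² / 2`.
  set ε := 3 * c / τ ^ 2
  have hε : 0 < ε := by positivity
  set φ := fun s => (ε * ((s - t) * ‖e‖) ^ 2 + ε⁻¹ * ‖uddot s‖ ^ 2) / 2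
  have hpoly : IntervalIntegrable (fun s => ε * ((s - t) ^ 2 * ‖e‖ ^ 2)) volume t (t + τ) :=
    Continuous.intervalIntegrable (by fun_prop) _ _
  have hφ_int : IntervalIntegrable φ volume t (t + τ) := by
    simpa only [φ, mul_pow] using (hpoly.add (hint.const_mul ε⁻¹)).div_const 2
  have hφ : ∫ s in t..t + τ, φ s
      = c * τ / 2 * ‖e‖ ^ 2 + τ ^ 2 / (6 * c) * ∫ s in t..t + τ, ‖uddot s‖ ^ 2 := by
    simp only [φ, mul_pow, intervalIntegral.integral_div]
    rw [intervalIntegral.integral_add hpoly (hint.const_mul _),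
      intervalIntegral.integral_const_mul, intervalIntegral.integral_const_mul,
      intervalIntegral.integral_mul_const, integral_sq_sub_left_endpoint]
    simp only [ε]
    field_simp
    ring
  have hf : ∀ s ∈ Icc t (t + τ), HasDerivAt (fun r => ⟪ι (u r), ι e⟫) ⟪ι (udot s), ι e⟫ s :=
    fun s hs => by
      simpa using (ι.hasFDerivAt.comp_hasDerivAt s (hu s hs)).inner ℝ (hasDerivAt_const s (ι e))
  have hle : ∀ s ∈ Ioo t (t + τ), (s - t) * uddot s e ≤ φ s := fun s hs => by
    have hst : 0 ≤ s - t := by linarith [hs.1]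
    calc (s - t) * uddot s e ≤ (s - t) * (‖uddot s‖ * ‖e‖) :=
          mul_le_mul_of_nonneg_left ((le_abs_self _).trans ((uddot s).le_opNorm e)) hst
      _ = 2 * ((s - t) * ‖e‖) * ‖uddot s‖ / 2 := by ring
      _ ≤ φ s := by unfold φ; gcongr; exact two_mul_le_add_mul_sq hε
  have key := taylor_remainder_le_integral htτ hf (huddot e)
    ((intervalIntegrable_iff_integrableOn_Icc_of_le htτ).1 hφ_int) hle
  rw [← hφ, inner_sub_left]
  simpa only [add_sub_cancel_left] using key

theorem implicit_euler_error_step (L : V →L[ℝ] V →L[ℝ] ℝ) {c t τ : ℝ} (hc : 0 < c)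
    (hell : ∀ v, c * ‖v‖ ^ 2 ≤ L v v) (hτ : 0 < τ)
    {u udot : ℝ → V} {uddot : ℝ → V →L[ℝ] ℝ}
    (hu : ∀ s ∈ Icc t (t + τ), HasDerivAt u (udot s) s)
    (huddot : ∀ v, ∀ s ∈ Icc t (t + τ),
      HasDerivAt (fun r => ⟪ι (udot r), ι v⟫) (uddot s v) s)
    (hint : IntervalIntegrable (fun s => ‖uddot s‖ ^ 2) volume t (t + τ)) {p q : V}
    (hstep : ∀ v, ⟪ι q - ι p, ι v⟫ / τ + L q v = ⟪ι (udot (t + τ)), ι v⟫ + L (u (t + τ)) v) :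
    ‖ι q - ι (u (t + τ))‖ ^ 2 + c * (τ * ‖q - u (t + τ)‖ ^ 2)
      ≤ ‖ι p - ι (u t)‖ ^ 2 + τ ^ 2 / (3 * c) * ∫ s in t..t + τ, ‖uddot s‖ ^ 2 := by
  set e := q - u (t + τ)
  have hιe : ι e = ι q - ι (u (t + τ)) := map_sub ι _ _
  have herr : ⟪ι e - (ι p - ι (u t)), ι e⟫ + τ * L e e
      = τ * ⟪ι (udot (t + τ)), ι e⟫ - ⟪ι (u (t + τ)) - ι (u t), ι e⟫ := by
    have h := hstep e
    rw [div_add' _ _ _ hτ.ne', div_eq_iff hτ.ne'] at h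
    simp only [e, map_sub, sub_apply, inner_sub_left] at h ⊢
    linear_combination h
  have hcons := implicit_euler_consistency_error_le ι hc hτ hu huddot hint e
  have henergy := norm_sq_sub_norm_sq_le_two_mul_inner (ι e) (ι p - ι (u t))
  have hcoercive : τ * (c * ‖e‖ ^ 2) ≤ τ * L e e := mul_le_mul_of_nonneg_left (hell e) hτ.le
  have hconst : τ ^ 2 / (3 * c) = 2 * (τ ^ 2 / (6 * c)) := by field_simp; norm_num
  rw [← hιe, hconst]
  linarith

end

theorem implicit_euler_parabolic_convergence_general
    {V H : Type*} [NormedAddCommGroup V] [InnerProductSpace ℝ V]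
    [NormedAddCommGroup H] [InnerProductSpace ℝ H]
    (ι : V →L[ℝ] H)
    (L : V →L[ℝ] V →L[ℝ] ℝ) (cL : ℝ) (hcL : 0 < cL)
    (hell : ∀ v : V, cL * ‖v‖ ^ 2 ≤ L v v)
    (T τ : ℝ) (n : ℕ) (hT : 0 < T) (hτ : τ = T / n)
    (u udot : ℝ → V) (uddot : ℝ → (V →L[ℝ] ℝ))
    (hu : ∀ t ∈ Set.Icc (0 : ℝ) T, HasDerivAt u (udot t) t)
    (huddot : ∀ v : V, ∀ t ∈ Set.Icc (0 : ℝ) T,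
      HasDerivAt (fun s => ⟪ι (udot s), ι v⟫) (uddot t v) t)
    (hint : IntervalIntegrable (fun s => ‖uddot s‖ ^ 2) MeasureTheory.volume 0 T)
    (p : ℕ → V) (hp0 : p 0 = u 0)
    (hstep : ∀ j : ℕ, 1 ≤ j → j ≤ n → ∀ v : V,
      ⟪ι (p j) - ι (p (j - 1)), ι v⟫ / τ + L (p j) v
        = ⟪ι (udot ((j : ℝ) * τ)), ι v⟫ + L (u ((j : ℝ) * τ)) v) :
    ∀ j : ℕ, j ≤ n →
      ‖ι (p j) - ι (u ((j : ℝ) * τ))‖ ^ 2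
          + cL * ∑ k ∈ Finset.Icc 1 j, τ * ‖p k - u ((k : ℝ) * τ)‖ ^ 2
        ≤ τ ^ 2 / (3 * cL) * ∫ s in (0 : ℝ)..((j : ℝ) * τ), ‖uddot s‖ ^ 2 := by
  intro j hj
  induction j with
  | zero => simp [hp0]
  | succ j ih =>
    have hn : (0 : ℝ) < n := by exact_mod_cast j.succ_pos.trans_le hj
    have hτ0 : 0 < τ := hτ ▸ div_pos hT hn
    have hcast : ((j + 1 : ℕ) : ℝ) * τ = j * τ + τ := by push_cast; ring
    have hstart : 0 ≤ (j : ℝ) * τ := by positivity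
    have hend : (j : ℝ) * τ + τ ≤ T := calc
      _ = ((j + 1 : ℕ) : ℝ) * τ := hcast.symm
      _ ≤ n * τ := by gcongr
      _ = T := by rw [hτ]; field_simp
    have hsub : Icc ((j : ℝ) * τ) (j * τ + τ) ⊆ Icc 0 T := Icc_subset_Icc hstart hend
    have hint_on {a b : ℝ} (ha : 0 ≤ a) (hab : a ≤ b) (hb : b ≤ T) :
        IntervalIntegrable (fun s => ‖uddot s‖ ^ 2) volume a b :=
      hint.mono_set (uIcc_subset_uIcc (mem_uIcc_of_le ha (hab.trans hb))
        (mem_uIcc_of_le (ha.trans hab) hb))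
    have step := implicit_euler_error_step ι L hcL hell hτ0 (fun s hs => hu s (hsub hs))
      (fun v s hs => huddot v s (hsub hs)) (hint_on hstart (by linarith) hend)
      (by simpa only [hcast, Nat.add_sub_cancel] using hstep (j + 1) (by omega) hj)
    rw [Finset.sum_Icc_succ_top (by omega), hcast,
      ← intervalIntegral.integral_add_adjacent_intervals (hint_on le_rfl hstart (by linarith))
        (hint_on hstart (by linarith) hend), mul_add, mul_add]
    linarith [ih (by omega)]

/-- First-order convergence of the implicit Euler scheme for an abstract parabolic
equation in a Gelfand triple `V ↪ H ↪ V*`: with uniform grid `t_j = jτ`, `τ = T/n`,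
data `F_j = u̇(t_j) + L u(t_j)` and `p₀ = u(0)`, one has
`‖p_j − u(t_j)‖_H² + c_L Σ_{k=1}^j τ ‖p_k − u(t_k)‖_V² ≤ (τ²/(3c_L)) ∫₀^{t_j} ‖ü‖_{V*}²`.
The operator `L : V → V*` is encoded as a continuous bilinear form, the embedding
`ι : V → H` realizes `H`-inner products, and `ü` is the weak second derivative of `u`,
a functional on `V`. -/
theorem implicit_euler_parabolic_convergence
    {V H : Type*} [NormedAddCommGroup V] [InnerProductSpace ℝ V] [CompleteSpace V]
    [NormedAddCommGroup H] [InnerProductSpace ℝ H] [CompleteSpace H]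
    (ι : V →L[ℝ] H) (hdense : DenseRange ι)
    (L : V →L[ℝ] V →L[ℝ] ℝ) (cL : ℝ) (hcL : 0 < cL)
    (hell : ∀ v : V, cL * ‖v‖ ^ 2 ≤ L v v)
    (T τ : ℝ) (n : ℕ) (hn : 0 < n) (hT : 0 < T) (hτ : τ = T / n)
    (u udot : ℝ → V) (uddot : ℝ → (V →L[ℝ] ℝ))
    (hu : ∀ t ∈ Set.Icc (0 : ℝ) T, HasDerivAt u (udot t) t)
    (huddot : ∀ v : V, ∀ t ∈ Set.Icc (0 : ℝ) T,
      HasDerivAt (fun s => ⟪ι (udot s), ι v⟫) (uddot t v) t)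
    (hint : IntervalIntegrable (fun s => ‖uddot s‖ ^ 2) MeasureTheory.volume 0 T)
    (p : ℕ → V) (hp0 : p 0 = u 0)
    (hstep : ∀ j : ℕ, 1 ≤ j → j ≤ n → ∀ v : V,
      ⟪ι (p j) - ι (p (j - 1)), ι v⟫ / τ + L (p j) v
        = ⟪ι (udot ((j : ℝ) * τ)), ι v⟫ + L (u ((j : ℝ) * τ)) v) :
    ∀ j : ℕ, j ≤ n →
      ‖ι (p j) - ι (u ((j : ℝ) * τ))‖ ^ 2
          + cL * ∑ k ∈ Finset.Icc 1 j, τ * ‖p k - u ((k : ℝ) * τ)‖ ^ 2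
        ≤ τ ^ 2 / (3 * cL) * ∫ s in (0 : ℝ)..((j : ℝ) * τ), ‖uddot s‖ ^ 2 :=
  implicit_euler_parabolic_convergence_general ι L cL hcL hell T τ n hT hτ u udot uddot hu huddot
    hint p hp0 hstep
end

section
/- One-step error recursion for implicit Euler: under the assumptions of the previous statement, for each j, ‖p_j − u(t_j)‖_H² + τ c_L ‖p_j − u(t_j)‖_V² ≤ ‖p_{j−1} − u(t_{j−1})‖_H² + (1/(τ c_L)) ‖∫_{t_{j−1}}^{t_j} (s − t_{j−1}) ü(s) ds‖_{V*}², and the last term is bounded by (τ²/(3 c_L)) ∫_{t_{j−1}}^{t_j} ‖ü(s)‖_{V*}² ds. -/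
open scoped RealInnerProductSpace

set_option maxHeartbeats 1600000 in
/-- One-step error recursion for the implicit Euler scheme in a Gelfand triple:
if the error `e_j = p_j − u(t_j)` satisfies
`⟪e_j − e_{j−1}, v⟫_H + τ L e_j v = −(∫_{t_{j−1}}^{t_j} (s − t_{j−1}) ü(s) ds) v`
for all `v ∈ V`, then
`‖e_j‖_H² + τ c_L ‖e_j‖_V² ≤ ‖e_{j−1}‖_H² + (1/(τ c_L)) ‖∫ (s − t_{j−1}) ü(s) ds‖_{V*}²`,
and `(1/(τ c_L)) ‖∫ (s − t_{j−1}) ü(s) ds‖_{V*}² ≤ (τ²/(3c_L)) ∫ ‖ü‖_{V*}²`. -/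
theorem implicit_euler_one_step_recursion
    {V H : Type*} [NormedAddCommGroup V] [InnerProductSpace ℝ V] [CompleteSpace V]
    [NormedAddCommGroup H] [InnerProductSpace ℝ H] [CompleteSpace H]
    (ι : V →L[ℝ] H) (hdense : DenseRange ι)
    (L : V →L[ℝ] V →L[ℝ] ℝ) (cL τ : ℝ) (hcL : 0 < cL) (hτ : 0 < τ)
    (hell : ∀ v : V, cL * ‖v‖ ^ 2 ≤ L v v)
    (t : ℕ → ℝ) (ht : ∀ k, t k = (k : ℝ) * τ)
    (uddot : ℝ → (V →L[ℝ] ℝ)) (j : ℕ) (hj : 1 ≤ j) (e : ℕ → V)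
    (hintg : IntervalIntegrable (fun s => ‖uddot s‖ ^ 2)
      MeasureTheory.volume (t (j - 1)) (t j))
    (hintg2 : IntervalIntegrable (fun s => (s - t (j - 1)) • uddot s)
      MeasureTheory.volume (t (j - 1)) (t j))
    (herr : ∀ v : V,
      ⟪ι (e j) - ι (e (j - 1)), ι v⟫ + τ * L (e j) v
        = -((∫ s in (t (j - 1))..(t j), (s - t (j - 1)) • uddot s) v)) :
    (‖ι (e j)‖ ^ 2 + τ * cL * ‖e j‖ ^ 2
        ≤ ‖ι (e (j - 1))‖ ^ 2
          + 1 / (τ * cL) * ‖∫ s in (t (j - 1))..(t j), (s - t (j - 1)) • uddot s‖ ^ 2) ∧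
    1 / (τ * cL) * ‖∫ s in (t (j - 1))..(t j), (s - t (j - 1)) • uddot s‖ ^ 2
        ≤ τ ^ 2 / (3 * cL) * ∫ s in (t (j - 1))..(t j), ‖uddot s‖ ^ 2 := by
  set a := t (j - 1) with ha
  set b := t j with hb
  set I : V →L[ℝ] ℝ := ∫ s in a..b, (s - a) • uddot s with hI
  set N : ℝ := ‖I‖ with hN
  set X : ℝ := ∫ s in a..b, ‖uddot s‖ ^ 2 with hX
  have hpos : 0 < τ * cL := mul_pos hτ hcL
  have hba : b - a = τ := by
    rw [ha, hb, ht, ht, Nat.cast_sub hj]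
    push_cast
    ring
  have hab : a ≤ b := by linarith
  have hX0 : 0 ≤ X := intervalIntegral.integral_nonneg hab (fun s _ => sq_nonneg _)
  constructor
  · -- Part 1
    have h := herr (e j)
    set x := ι (e j) with hx
    set y := ι (e (j - 1)) with hy
    have hsub : ⟪x - y, x⟫ = ‖x‖ ^ 2 - ⟪y, x⟫ := by
      rw [inner_sub_left, real_inner_self_eq_norm_sq]
    have hyx : ⟪y, x⟫ ≤ ‖y‖ * ‖x‖ := real_inner_le_norm y x
    have hL : cL * ‖e j‖ ^ 2 ≤ L (e j) (e j) := hell (e j)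
    have hIe : -(N * ‖e j‖) ≤ I (e j) := by
      have h1 : ‖I (e j)‖ ≤ N * ‖e j‖ := I.le_opNorm (e j)
      rw [Real.norm_eq_abs] at h1
      linarith [abs_le.mp h1]
    clear_value I N x y
    have hyoung : 2 * (N * ‖e j‖) * (τ * cL) ≤ N ^ 2 + (τ * cL) ^ 2 * ‖e j‖ ^ 2 := by
      nlinarith [sq_nonneg (N - τ * cL * ‖e j‖)]
    have hD : N ^ 2 = (1 / (τ * cL) * N ^ 2) * (τ * cL) := by
      field_simp
    have hyoung2 : 2 * (N * ‖e j‖) ≤ 1 / (τ * cL) * N ^ 2 + τ * cL * ‖e j‖ ^ 2 := by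
      rw [hD] at hyoung
      nlinarith [hpos, hyoung]
    have hLτ : τ * (cL * ‖e j‖ ^ 2) ≤ τ * L (e j) (e j) :=
      mul_le_mul_of_nonneg_left hL hτ.le
    rw [hsub] at h
    nlinarith [sq_nonneg (‖x‖ - ‖y‖), hyx, hLτ, hIe, h, hyoung2]
  · -- Part 2
    have hNb : ∀ l : ℝ, 0 < l → N ≤ l * τ ^ 3 / 6 + X / (2 * l) := by
      intro l hl
      have h1 : N ≤ ∫ s in a..b, ‖(s - a) • uddot s‖ := by
        rw [hN, hI]
        exact intervalIntegral.norm_integral_le_integral_norm hab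
      have hInt2 : IntervalIntegrable
          (fun s => l / 2 * (s - a) ^ 2 + 1 / (2 * l) * ‖uddot s‖ ^ 2)
          MeasureTheory.volume a b := by
        apply IntervalIntegrable.add
        · exact (Continuous.intervalIntegrable (by fun_prop) a b)
        · exact hintg.const_mul _
      have h2 : (∫ s in a..b, ‖(s - a) • uddot s‖)
          ≤ ∫ s in a..b, (l / 2 * (s - a) ^ 2 + 1 / (2 * l) * ‖uddot s‖ ^ 2) := by
        apply intervalIntegral.integral_mono_on hab hintg2.norm hInt2
        intro s hs
        have hsa : 0 ≤ s - a := by linarith [hs.1]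
        have hns : ‖(s - a) • uddot s‖ = ‖s - a‖ * ‖uddot s‖ := norm_smul (s - a) (uddot s)
        rw [hns, Real.norm_eq_abs, abs_of_nonneg hsa]
        calc (s - a) * ‖uddot s‖
            ≤ (l ^ 2 * (s - a) ^ 2 + ‖uddot s‖ ^ 2) / (2 * l) := by
              rw [le_div_iff₀ (by positivity)]
              nlinarith [sq_nonneg (l * (s - a) - ‖uddot s‖)]
          _ = l / 2 * (s - a) ^ 2 + 1 / (2 * l) * ‖uddot s‖ ^ 2 := by
              field_simp
      have h3 : (∫ s in a..b, (l / 2 * (s - a) ^ 2 + 1 / (2 * l) * ‖uddot s‖ ^ 2))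
          = l / 2 * ((b - a) ^ 3 / 3) + 1 / (2 * l) * X := by
        rw [intervalIntegral.integral_add
            ((Continuous.intervalIntegrable (by fun_prop) a b))
            (hintg.const_mul _),
          intervalIntegral.integral_const_mul, intervalIntegral.integral_const_mul]
        congr 1
        congr 1
        have h4 : (∫ s in a..b, (s - a) ^ 2)
            = ∫ s in (a - a)..(b - a), s ^ 2 := by
          exact intervalIntegral.integral_comp_sub_right (fun x => x ^ 2) a
        rw [h4, integral_pow]
        simp
        ring
      rw [h3, hba] at h2
      calc N ≤ l / 2 * (τ ^ 3 / 3) + 1 / (2 * l) * X := h1.trans h2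
        _ = l * τ ^ 3 / 6 + X / (2 * l) := by ring
    have hNsq : N ^ 2 ≤ τ ^ 3 / 3 * X := by
      rcases eq_or_lt_of_le hX0 with hXz | hXpos
      · -- X = 0
        have hN0 : N ≤ 0 := by
          by_contra hcon
          push_neg at hcon
          have hl : 0 < 3 * N / τ ^ 3 := by positivity
          have := hNb _ hl
          rw [← hXz] at this
          have h5 : 3 * N / τ ^ 3 * τ ^ 3 / 6 = N / 2 := by field_simp; ring
          rw [h5] at this
          simp at this
          linarith
        have : N = 0 := le_antisymm hN0 (norm_nonneg _)
        rw [this, ← hXz]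
        simp
      · -- X > 0
        set l : ℝ := Real.sqrt (3 * X / τ ^ 3) with hl
        have hlpos : 0 < l := Real.sqrt_pos.mpr (by positivity)
        have hl2 : l ^ 2 * τ ^ 3 = 3 * X := by
          rw [hl, Real.sq_sqrt (by positivity)]
          field_simp
        have h8 : l * τ ^ 3 / 6 + X / (2 * l) = X / l := by
          rw [div_add_div _ _ (by norm_num : (6:ℝ) ≠ 0) (by positivity),
            div_eq_div_iff (by positivity) (ne_of_gt hlpos)]
          nlinarith [hl2]
        have hNl : N * l ≤ X := by
          have := hNb l hlpos
          rw [h8] at this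
          exact (le_div_iff₀ hlpos).mp this
        have hsq : (N * l) * (N * l) ≤ X * X :=
          mul_le_mul hNl hNl (by positivity) hX0
        have h10 : N ^ 2 * (l ^ 2 * τ ^ 3) ≤ X ^ 2 * τ ^ 3 := by
          nlinarith [pow_pos hτ 3]
        rw [hl2] at h10
        nlinarith [hXpos]
    have hfin : 1 / (τ * cL) * (τ ^ 3 / 3 * X) = τ ^ 2 / (3 * cL) * X := by
      field_simp
    calc 1 / (τ * cL) * N ^ 2 ≤ 1 / (τ * cL) * (τ ^ 3 / 3 * X) := by
          apply mul_le_mul_of_nonneg_left hNsq (by positivity)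
      _ = τ ^ 2 / (3 * cL) * X := hfin
end

section
/- Let h : [0,T] → ℝᴺ be (p+1)-times weakly differentiable with h^{(p+1)} ∈ L², let b, c ∈ ℝˢ with 0 ≤ c_i ≤ 1 define a quadrature satisfying the order conditions Σ_i b_i c_i^{k−1} = 1/k for k = 1,…,p, and let on a uniform grid t_k = kτ, R_k := τ Σ_i b_i ∫_{t_{k−1}}^{t_{k−1}+τ c_i} ((t_{k−1}+τ c_i − s)^{p−1}/(p−1)!) h^{(p+1)}(s) ds and R̃_k := ∫_{t_{k−1}}^{t_k} ((t_k − s)^p / p!) h^{(p+1)}(s) ds. Then |Σ_{k=1}^j (R_k − R̃_k)|² ≤ C · t_j · τ^{2p} ∫₀^{t_j} |h^{(p+1)}(s)|² ds, where C depends only on b, c, p. -/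
/-!
On a step `[a, a + τ]`, the kernels `(t - x) ^ n / n!` of both Taylor remainders are bounded by
`τ ^ n / n!`, because every stage point `a + τ cᵢ` lies in the step. Hence
`‖R_k - R̃_k‖ ≤ K τ ^ p ∫_{t_{k-1}}^{t_k} ‖h^{(p+1)}‖` with `K = (∑ |bᵢ|) / (p-1)! + 1 / p!`.
Summing over the grid gives `K τ ^ p ∫_0^{t_j} ‖h^{(p+1)}‖`, and Cauchy–Schwarz,
`(∫_0^{t_j} ‖g‖) ^ 2 ≤ t_j ∫_0^{t_j} ‖g‖ ^ 2`, gives the estimate with `C = K ^ 2`.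
-/

open MeasureTheory intervalIntegral Finset

theorem sq_intervalIntegral_le_mul_intervalIntegral_sq {g : ℝ → ℝ} {a b : ℝ} (hab : a ≤ b)
    (hg : IntervalIntegrable g volume a b)
    (hg2 : IntervalIntegrable (fun x => g x ^ 2) volume a b) :
    (∫ x in a..b, g x) ^ 2 ≤ (b - a) * ∫ x in a..b, g x ^ 2 := by
  rcases hab.eq_or_lt with rfl | hlt
  · simp
  set I := ∫ x in a..b, g x
  set G := ∫ x in a..b, g x ^ 2
  have hL : 0 < b - a := sub_pos.2 hlt
  -- `M` is the mean of `g`, and `0 ≤ ∫ (g - M) ^ 2 = G - I ^ 2 / (b - a)`.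
  set M := I / (b - a)
  have hexpand : ∫ x in a..b, (g x - M) ^ 2 = G - 2 * M * I + M ^ 2 * (b - a) := by
    have hlin : IntervalIntegrable (fun x => 2 * M * g x) volume a b := hg.const_mul _
    have hsq : ∀ x, (g x - M) ^ 2 = g x ^ 2 - 2 * M * g x + M ^ 2 := fun x => by ring
    simp_rw [hsq]
    rw [integral_add (hg2.sub hlin) intervalIntegrable_const, integral_sub hg2 hlin,
      intervalIntegral.integral_const_mul, intervalIntegral.integral_const, smul_eq_mul]
    ring
  have hnonneg : 0 ≤ G - 2 * M * I + M ^ 2 * (b - a) :=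
    hexpand ▸ integral_nonneg hab fun _ _ => sq_nonneg _
  have hI : I = M * (b - a) := (div_mul_cancel₀ I hL.ne').symm
  rw [hI] at hnonneg ⊢
  nlinarith

section

variable {E : Type*} [NormedAddCommGroup E] [NormedSpace ℝ E]

noncomputable def taylorKernelIntegral (n : ℕ) (f : ℝ → E) (a t : ℝ) : E :=
  ∫ x in a..t, ((t - x) ^ n / n.factorial : ℝ) • f x

theorem norm_taylorKernelIntegral_le {n : ℕ} {f : ℝ → E} {a t u : ℝ} (hat : a ≤ t) (htu : t ≤ u)
    (hf : IntervalIntegrable f volume a u) :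
    ‖taylorKernelIntegral n f a t‖ ≤ (u - a) ^ n / n.factorial * ∫ x in a..u, ‖f x‖ := by
  have hft : IntervalIntegrable f volume a t :=
    hf.mono_set (Set.uIcc_subset_uIcc_left (Set.mem_uIcc_of_le hat htu))
  calc ‖taylorKernelIntegral n f a t‖
      ≤ ∫ x in a..t, (u - a) ^ n / n.factorial * ‖f x‖ := by
        refine norm_integral_le_of_norm_le hat (ae_of_all _ fun x hx => ?_)
          (hft.norm.const_mul _)
        have hxt : 0 ≤ t - x := sub_nonneg.2 hx.2
        rw [norm_smul, Real.norm_of_nonneg (by positivity)]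
        gcongr
        linarith [hx.1]
    _ = (u - a) ^ n / n.factorial * ∫ x in a..t, ‖f x‖ := integral_const_mul _ _
    _ ≤ (u - a) ^ n / n.factorial * ∫ x in a..u, ‖f x‖ := by
        have hua : 0 ≤ u - a := by linarith
        gcongr
        exact integral_mono_interval le_rfl hat htu (ae_of_all _ fun _ => norm_nonneg _) hf.norm

theorem norm_rungeKutta_step_defect_le {s p : ℕ} (hp : 1 ≤ p) (b c : Fin s → ℝ)
    (hc : ∀ i, 0 ≤ c i ∧ c i ≤ 1) {f : ℝ → E} {a τ : ℝ} (hτ : 0 ≤ τ)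
    (hf : IntervalIntegrable f volume a (a + τ)) :
    ‖τ • ∑ i, b i • taylorKernelIntegral (p - 1) f a (a + τ * c i)
        - taylorKernelIntegral p f a (a + τ)‖
      ≤ τ ^ p * ((∑ i, |b i|) / (p - 1).factorial + 1 / p.factorial) *
          ∫ x in a..a + τ, ‖f x‖ := by
  obtain ⟨q, rfl⟩ : ∃ q, p = q + 1 := ⟨p - 1, by omega⟩
  simp only [Nat.add_sub_cancel]
  set F := ∫ x in a..a + τ, ‖f x‖
  have hstage : ∀ i, ‖b i • taylorKernelIntegral q f a (a + τ * c i)‖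
      ≤ |b i| * (τ ^ q / q.factorial * F) := fun i => by
    rw [norm_smul, Real.norm_eq_abs]
    gcongr
    simpa using norm_taylorKernelIntegral_le (by nlinarith [hc i]) (by nlinarith [hc i]) hf
  have hlast : ‖taylorKernelIntegral (q + 1) f a (a + τ)‖
      ≤ τ ^ (q + 1) / (q + 1).factorial * F := by
    simpa using norm_taylorKernelIntegral_le (le_add_of_nonneg_right hτ) le_rfl hf
  calc _ ≤ τ * ∑ i, |b i| * (τ ^ q / q.factorial * F) + τ ^ (q + 1) / (q + 1).factorial * F := by
        refine (norm_sub_le _ _).trans (add_le_add ?_ hlast)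
        rw [norm_smul, Real.norm_of_nonneg hτ]
        gcongr
        exact (norm_sum_le _ _).trans (sum_le_sum fun i _ => hstage i)
    _ = _ := by rw [← sum_mul]; ring

theorem sum_Icc_intervalIntegral_uniform_grid {g : ℝ → E} {τ : ℝ} {j : ℕ}
    (hg : ∀ k < j, IntervalIntegrable g volume (k * τ) ((k + 1 : ℕ) * τ)) :
    ∑ k ∈ Icc 1 j, ∫ x in ((k : ℝ) - 1) * τ..(k : ℝ) * τ, g x = ∫ x in (0 : ℝ)..j * τ, g x := by
  have := sum_integral_adjacent_intervals (a := fun k : ℕ => (k : ℝ) * τ) hg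
  simp only [Nat.cast_zero, zero_mul] at this
  rw [← this, ← Ico_add_one_right_eq_Icc, range_eq_Ico]
  refine (sum_Ico_add' (fun k : ℕ => ∫ x in ((k : ℝ) - 1) * τ..(k : ℝ) * τ, g x) 0 j 1).symm.trans
    (sum_congr rfl fun k _ => ?_)
  simp

end

theorem norm_sum_le_of_norm_le_uniform_grid {E : Type*} [NormedAddCommGroup E] {v : ℕ → E}
    {g : ℝ → ℝ} {τ A : ℝ} {j : ℕ}
    (hv : ∀ k ∈ Icc 1 j, ‖v k‖ ≤ A * ∫ x in ((k : ℝ) - 1) * τ..(k : ℝ) * τ, g x)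
    (hg : ∀ k < j, IntervalIntegrable g volume (k * τ) ((k + 1 : ℕ) * τ)) :
    ‖∑ k ∈ Icc 1 j, v k‖ ≤ A * ∫ x in (0 : ℝ)..j * τ, g x := by
  rw [← sum_Icc_intervalIntegral_uniform_grid hg, mul_sum]
  exact (norm_sum_le _ _).trans (sum_le_sum hv)

theorem runge_kutta_remainder_accumulation_general
    (s p : ℕ) (hp : 1 ≤ p) (b c : Fin s → ℝ)
    (hc : ∀ i, 0 ≤ c i ∧ c i ≤ 1) :
    ∃ C > (0 : ℝ), ∀ (N : ℕ) (hp1 : ℝ → EuclideanSpace ℝ (Fin N)) (τ : ℝ), 0 < τ →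
      ∀ j : ℕ,
      (∀ x y : ℝ, IntervalIntegrable hp1 MeasureTheory.volume x y) →
      IntervalIntegrable (fun x => ‖hp1 x‖ ^ 2) MeasureTheory.volume 0 ((j : ℝ) * τ) →
      ‖∑ k ∈ Finset.Icc 1 j,
          ((τ • ∑ i, b i •
              ∫ x in (((k : ℝ) - 1) * τ)..(((k : ℝ) - 1) * τ + τ * c i),
                (((((k : ℝ) - 1) * τ + τ * c i - x) ^ (p - 1) / (p - 1).factorial : ℝ)
                  • hp1 x))
            - ∫ x in (((k : ℝ) - 1) * τ)..((k : ℝ) * τ),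
                ((((k : ℝ) * τ - x) ^ p / p.factorial : ℝ) • hp1 x))‖ ^ 2
        ≤ C * ((j : ℝ) * τ) * τ ^ (2 * p) * ∫ x in (0 : ℝ)..((j : ℝ) * τ), ‖hp1 x‖ ^ 2 := by
  set K : ℝ := (∑ i, |b i|) / (p - 1).factorial + 1 / p.factorial
  refine ⟨K ^ 2, by positivity, fun N f τ hτ j hf hf2 => ?_⟩
  calc _ ≤ (τ ^ p * K * ∫ x in (0 : ℝ)..j * τ, ‖f x‖) ^ 2 := by
        gcongr
        refine norm_sum_le_of_norm_le_uniform_grid (fun k _ => ?_) fun _ _ => (hf _ _).norm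
        have := norm_rungeKutta_step_defect_le hp b c hc (a := ((k : ℝ) - 1) * τ) hτ.le (hf _ _)
        rwa [show ((k : ℝ) - 1) * τ + τ = k * τ by ring] at this
    _ ≤ (τ ^ p) ^ 2 * K ^ 2 * ((j * τ - 0) * ∫ x in (0 : ℝ)..j * τ, ‖f x‖ ^ 2) := by
        rw [mul_pow, mul_pow]
        gcongr
        exact sq_intervalIntegral_le_mul_intervalIntegral_sq (by positivity) (hf _ _).norm hf2
    _ = _ := by ring

/-- Accumulated Runge–Kutta quadrature-remainder estimate: for a quadrature
`(b, c)` with `0 ≤ cᵢ ≤ 1` satisfying the order conditions up to order `p`,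
there is `C = C(b, c, p) > 0` such that on every uniform grid `t_k = kτ` the
accumulated Taylor remainders satisfy
`|Σ_{k=1}^j (R_k − R̃_k)|² ≤ C t_j τ^{2p} ∫₀^{t_j} |h^{(p+1)}|²`. -/
theorem runge_kutta_remainder_accumulation
    (s p : ℕ) (hp : 1 ≤ p) (b c : Fin s → ℝ)
    (hc : ∀ i, 0 ≤ c i ∧ c i ≤ 1)
    (horder : ∀ k : ℕ, 1 ≤ k → k ≤ p → ∑ i, b i * c i ^ (k - 1) = 1 / (k : ℝ)) :
    ∃ C > (0 : ℝ), ∀ (N : ℕ) (hp1 : ℝ → EuclideanSpace ℝ (Fin N)) (τ : ℝ), 0 < τ →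
      ∀ j : ℕ,
      (∀ x y : ℝ, IntervalIntegrable hp1 MeasureTheory.volume x y) →
      IntervalIntegrable (fun x => ‖hp1 x‖ ^ 2) MeasureTheory.volume 0 ((j : ℝ) * τ) →
      ‖∑ k ∈ Finset.Icc 1 j,
          ((τ • ∑ i, b i •
              ∫ x in (((k : ℝ) - 1) * τ)..(((k : ℝ) - 1) * τ + τ * c i),
                (((((k : ℝ) - 1) * τ + τ * c i - x) ^ (p - 1) / (p - 1).factorial : ℝ)
                  • hp1 x))
            - ∫ x in (((k : ℝ) - 1) * τ)..((k : ℝ) * τ),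
                ((((k : ℝ) * τ - x) ^ p / p.factorial : ℝ) • hp1 x))‖ ^ 2
        ≤ C * ((j : ℝ) * τ) * τ ^ (2 * p) * ∫ x in (0 : ℝ)..((j : ℝ) * τ), ‖hp1 x‖ ^ 2 :=
  runge_kutta_remainder_accumulation_general s p hp b c hc
end
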